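/- arXiv:1809.07390 — 2 statements merged into one kernel-verified Lean document; each statement's English description precedes it below -/
import Mathlib

section
/- Let n be even, let f be an s-plateaued Boolean function on 𝔽₂^k whose Walsh support S_f does not contain the zero vector, and let h₁,…,h_k be Boolean functions on 𝔽₂ⁿ such that for every ω ∈ S_f the function ω·(h₁,…,h_k) is bent on 𝔽₂ⁿ. If there exist Boolean functions h'₁,…,h'_k on 𝔽₂ⁿ (not necessarily bent) such that (ω·(h₁,…,h_k))* = ω·(h'₁,…,h'_k) for every ω ∈ S_f, then 𝔣(x) = f(h₁(x),…,h_k(x)) is a bent function on 𝔽₂ⁿ and its dual is 𝔣*(x) = f(h'₁(x),…,h'_k(x)). -/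
open Finset

def dotp {ι : Type*} [Fintype ι] (a b : ι → ZMod 2) : ZMod 2 := ∑ i, a i * b i

def WHT {ι : Type*} [Fintype ι] [DecidableEq ι]
    (f : (ι → ZMod 2) → ZMod 2) (ω : ι → ZMod 2) : ℤ :=
  ∑ x : ι → ZMod 2, (-1 : ℤ) ^ ((f x + dotp ω x).val)

def IsBent {ι : Type*} [Fintype ι] [DecidableEq ι] (f : (ι → ZMod 2) → ZMod 2) : Prop :=
  ∀ ω, |WHT f ω| = 2 ^ (Fintype.card ι / 2)

def IsDualBent {ι : Type*} [Fintype ι] [DecidableEq ι] (f g : (ι → ZMod 2) → ZMod 2) : Prop :=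
  ∀ ω, WHT f ω = 2 ^ (Fintype.card ι / 2) * (-1 : ℤ) ^ ((g ω).val)

def IsPlateaued {ι : Type*} [Fintype ι] [DecidableEq ι] (s : ℕ) (f : (ι → ZMod 2) → ZMod 2) : Prop :=
  ∀ ω, WHT f ω = 0 ∨ WHT f ω = 2 ^ ((Fintype.card ι + s) / 2) ∨
    WHT f ω = -(2 ^ ((Fintype.card ι + s) / 2))

lemma sign_add (a b : ZMod 2) :
    ((-1:ℤ)) ^ ((a + b).val) = ((-1:ℤ)) ^ a.val * ((-1:ℤ)) ^ b.val := by revert a b; decide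

lemma dotp_add_left {ι : Type*} [Fintype ι] (a b c : ι → ZMod 2) :
    dotp (a + b) c = dotp a c + dotp b c := by
  simp [dotp, add_mul, Finset.sum_add_distrib]

lemma dotp_add_right {ι : Type*} [Fintype ι] (a b c : ι → ZMod 2) :
    dotp a (b + c) = dotp a b + dotp a c := by
  simp [dotp, mul_add, Finset.sum_add_distrib]

lemma dotp_single {ι : Type*} [Fintype ι] [DecidableEq ι] (i0 : ι) (u : ι → ZMod 2) :
    dotp (Pi.single i0 1) u = u i0 := by
  rw [dotp, Finset.sum_eq_single i0]
  · simp
  · intro i _ hi; simp [Pi.single_apply, hi]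
  · simp

lemma char_sum {ι : Type*} [Fintype ι] [DecidableEq ι] (u : ι → ZMod 2) :
    ∑ w : ι → ZMod 2, ((-1:ℤ)) ^ ((dotp w u).val)
      = if u = 0 then 2 ^ Fintype.card ι else 0 := by
  split_ifs with hu
  · subst hu
    have : ∀ w : ι → ZMod 2, dotp w 0 = 0 := fun w => by simp [dotp]
    simp [this, Fintype.card_fun]
  · obtain ⟨i0, hi0⟩ : ∃ i, u i ≠ 0 := by
      by_contra hc; push_neg at hc; exact hu (funext hc)
    have hu1 : u i0 = 1 := by
      have : ∀ a : ZMod 2, a ≠ 0 → a = 1 := by decide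
      exact this _ hi0
    have hshift : ∑ w : ι → ZMod 2, ((-1:ℤ)) ^ ((dotp (w + Pi.single i0 1) u).val)
        = ∑ w : ι → ZMod 2, ((-1:ℤ)) ^ ((dotp w u).val) :=
      Fintype.sum_equiv (Equiv.addRight (Pi.single i0 1)) _ _ (fun w => rfl)
    have hneg : ∀ w : ι → ZMod 2,
        ((-1:ℤ)) ^ ((dotp (w + Pi.single i0 1) u).val)
          = -((-1:ℤ)) ^ ((dotp w u).val) := by
      intro w
      rw [dotp_add_left, dotp_single, hu1, sign_add]
      norm_num [ZMod.val_one]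
    rw [Finset.sum_congr rfl (fun w _ => hneg w), Finset.sum_neg_distrib] at hshift
    linarith

lemma inv_wht {ι : Type*} [Fintype ι] [DecidableEq ι]
    (f : (ι → ZMod 2) → ZMod 2) (y : ι → ZMod 2) :
    ∑ w : ι → ZMod 2, WHT f w * (-1) ^ ((dotp w y).val)
      = 2 ^ Fintype.card ι * (-1) ^ ((f y).val) := by
  have hiff : ∀ z : ι → ZMod 2, z + y = 0 ↔ z = y := by
    intro z
    constructor
    · intro hz; funext i
      have h2 := congrFun hz i
      have : ∀ a b : ZMod 2, a + b = 0 → a = b := by decide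
      exact this _ _ h2
    · rintro rfl; funext i
      simp only [Pi.add_apply, Pi.zero_apply]
      have : ∀ a : ZMod 2, a + a = 0 := by decide
      exact this _
  calc ∑ w : ι → ZMod 2, WHT f w * (-1) ^ ((dotp w y).val)
      = ∑ w : ι → ZMod 2, ∑ z : ι → ZMod 2,
          (-1 : ℤ) ^ ((f z).val) * (-1) ^ ((dotp w (z + y)).val) := by
        refine Finset.sum_congr rfl fun w _ => ?_
        rw [WHT, Finset.sum_mul]
        refine Finset.sum_congr rfl fun z _ => ?_
        rw [sign_add, dotp_add_right, sign_add]; ring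
    _ = ∑ z : ι → ZMod 2, (-1 : ℤ) ^ ((f z).val)
          * ∑ w : ι → ZMod 2, (-1 : ℤ) ^ ((dotp w (z + y)).val) := by
        rw [Finset.sum_comm]
        exact Finset.sum_congr rfl fun z _ => (Finset.mul_sum _ _ _).symm
    _ = ∑ z : ι → ZMod 2, (-1 : ℤ) ^ ((f z).val)
          * (if z = y then 2 ^ Fintype.card ι else 0) := by
        refine Finset.sum_congr rfl fun z _ => ?_
        rw [char_sum]
        congr 1
        simp [hiff z]
    _ = 2 ^ Fintype.card ι * (-1) ^ ((f y).val) := by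
        simp [mul_ite, Finset.sum_ite_eq', mul_comm]

theorem stmt15' {n k : ℕ}
    (f : (Fin k → ZMod 2) → ZMod 2)
    (h h' : Fin k → (Fin n → ZMod 2) → ZMod 2)
    (hdualeq : ∀ w : Fin k → ZMod 2, WHT f w ≠ 0 →
      ∀ ω, WHT (fun x => dotp w (fun i => h i x)) ω
        = 2 ^ (Fintype.card (Fin n) / 2)
          * (-1 : ℤ) ^ ((dotp w (fun i => h' i ω)).val)) :
    ∀ ω, WHT (fun x : Fin n → ZMod 2 => f (fun i => h i x)) ω
      = 2 ^ (Fintype.card (Fin n) / 2)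
        * (-1 : ℤ) ^ ((f (fun i => h' i ω)).val) := by
  intro ω
  set K : ℤ := 2 ^ Fintype.card (Fin k) with hK
  set M : ℤ := 2 ^ (Fintype.card (Fin n) / 2) with hM
  have hKne : K ≠ 0 := by positivity
  refine mul_left_cancel₀ hKne ?_
  calc K * WHT (fun x : Fin n → ZMod 2 => f (fun i => h i x)) ω
      = ∑ x : Fin n → ZMod 2,
          K * (-1 : ℤ) ^ ((f (fun i => h i x) + dotp ω x).val) := by
        rw [WHT, Finset.mul_sum]
    _ = ∑ x : Fin n → ZMod 2,
          (∑ w : Fin k → ZMod 2, WHT f w * (-1) ^ ((dotp w (fun i => h i x)).val))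
            * (-1 : ℤ) ^ ((dotp ω x).val) := by
        refine Finset.sum_congr rfl fun x _ => ?_
        rw [inv_wht, sign_add, hK]; ring
    _ = ∑ w : Fin k → ZMod 2,
          WHT f w * WHT (fun x => dotp w (fun i => h i x)) ω := by
        simp only [Finset.sum_mul]
        rw [Finset.sum_comm]
        refine Finset.sum_congr rfl fun w _ => ?_
        have hw2 : WHT (fun x => dotp w fun i => h i x) ω
            = ∑ x : Fin n → ZMod 2,
                (-1:ℤ) ^ ((dotp w (fun i => h i x)).val) * (-1) ^ ((dotp ω x).val) := by
          rw [WHT]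
          exact Finset.sum_congr rfl fun x _ => by rw [sign_add]
        rw [hw2, Finset.mul_sum]
        exact Finset.sum_congr rfl fun x _ => by ring
    _ = ∑ w : Fin k → ZMod 2,
          WHT f w * (M * (-1) ^ ((dotp w (fun i => h' i ω)).val)) := by
        refine Finset.sum_congr rfl fun w _ => ?_
        by_cases hw : WHT f w = 0
        · rw [hw]; ring
        · rw [hdualeq w hw ω, hM]
    _ = M * ∑ w : Fin k → ZMod 2,
          WHT f w * (-1) ^ ((dotp w (fun i => h' i ω)).val) := by
        rw [Finset.mul_sum]
        refine Finset.sum_congr rfl fun w _ => ?_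
        ring
    _ = M * (K * (-1) ^ ((f (fun i => h' i ω)).val)) := by rw [inv_wht, hK]
    _ = K * (M * (-1) ^ ((f (fun i => h' i ω)).val)) := by ring

def WSupport {ι : Type*} [Fintype ι] [DecidableEq ι] (f : (ι → ZMod 2) → ZMod 2) : Set (ι → ZMod 2) :=
  {ω | WHT f ω ≠ 0}

/-- with `f` an `s`-plateaued function on `𝔽₂^k` whose Walsh support
avoids `0`, `ω·(h₁,…,h_k)` bent on `𝔽₂^n` for every `ω ∈ S_f`, and Boolean
functions `h'₁,…,h'_k` with `(ω·(h₁,…,h_k))* = ω·(h'₁,…,h'_k)` for all `ω ∈ S_f`,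
the function `𝔣 = f(h₁,…,h_k)` is bent with dual `𝔣* = f(h'₁,…,h'_k)`. -/
theorem stmt15 {n k s : ℕ} (hne : Even n)
    (f : (Fin k → ZMod 2) → ZMod 2) (hf : IsPlateaued s f)
    (h0 : WHT f 0 = 0)
    (h h' : Fin k → (Fin n → ZMod 2) → ZMod 2)
    (hbent : ∀ w : Fin k → ZMod 2, WHT f w ≠ 0 →
      IsBent (fun x => dotp w (fun i => h i x)))
    (hdualeq : ∀ w : Fin k → ZMod 2, WHT f w ≠ 0 →
      IsDualBent (fun x => dotp w (fun i => h i x))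
        (fun x => dotp w (fun i => h' i x))) :
    IsBent (fun x : Fin n → ZMod 2 => f (fun i => h i x)) ∧
      IsDualBent (fun x : Fin n → ZMod 2 => f (fun i => h i x))
        (fun x => f (fun i => h' i x)) := by
  have key : ∀ ω, WHT (fun x : Fin n → ZMod 2 => f (fun i => h i x)) ω
      = 2 ^ (Fintype.card (Fin n) / 2) * (-1 : ℤ) ^ ((f (fun i => h' i ω)).val) :=
    stmt15' f h h' (fun w hw ω => hdualeq w hw ω)
  refine ⟨fun ω => ?_, key⟩
  rw [key ω, abs_mul, abs_pow, abs_pow]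
  simp
end

section
/- Let k ≥ 2, let U ⊆ 𝔽₂^k be a linear subspace of dimension k−2, let z = s+2 with 0 ≤ s ≤ n−3 and z of the same parity as n, and let a, h₁,…,h_k be Boolean functions on 𝔽₂ⁿ such that for every ω ∈ U^⊥ the function g_ω = a ⊕ ω·(h₁,…,h_k) is z-plateaued on 𝔽₂ⁿ, and these functions have pairwise disjoint spectra, i.e. W_{g_ω}(v)·W_{g_{ω'}}(v) = 0 for all v ∈ 𝔽₂ⁿ and all distinct ω, ω' ∈ U^⊥. Set 𝔣(x) = a(x) ⊕ φ_U(h₁(x),…,h_k(x)). Then: (i) if z > 2, 𝔣 is an s-plateaued function on 𝔽₂ⁿ; (ii) if n is even and z = 2, 𝔣 is a bent function on 𝔽₂ⁿ. -/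
open Finset

/-! Let `V = U^⊥` be the orthogonal of `U` for the dot product: `|V| = 4` and `V^⊥ = U`.
Character orthogonality gives `∑_{w ∈ V} (-1)^{w·y} = 4·[y ∈ U]`, hence
`(-1)^{φ_U(y)} = 1 - (1/2) ∑_{w ∈ V} (-1)^{w·y}` and `2 W_𝔣 = 2 W_a - ∑_{w ∈ V} W_{g_w}`,
where `a = g_0`. By disjointness of the spectra at most one `W_{g_w}(v)` is nonzero, so
`2 W_𝔣(v)` is `0` or `±W_{g_w}(v) = ±2^{(n+s)/2+1}`: `𝔣` is `s`-plateaued. For `s = 0`,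
Parseval forces every `W_𝔣(v)` to be nonzero, so `𝔣` is bent. -/

lemma neg_one_pow_val_add (p q : ZMod 2) :
    (-1 : ℤ) ^ (p + q).val = (-1) ^ p.val * (-1) ^ q.val := by
  revert p q; decide

lemma sum_neg_one_pow_val_eq_zero {G : Type*} [AddCommGroup G] [Fintype G] {χ : G →+ ZMod 2}
    (hχ : χ ≠ 0) : ∑ g, (-1 : ℤ) ^ (χ g).val = 0 := by
  obtain ⟨g₀, hg₀⟩ : ∃ g₀, χ g₀ = 1 := by
    by_contra! h
    have h2 : ∀ p : ZMod 2, p ≠ 1 → p = 0 := by decide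
    exact hχ (AddMonoidHom.ext fun g => h2 _ (h g))
  have : ∑ g, (-1 : ℤ) ^ (χ g).val = -∑ g, (-1 : ℤ) ^ (χ g).val :=
    calc ∑ g, (-1 : ℤ) ^ (χ g).val = ∑ g, (-1 : ℤ) ^ (χ (g + g₀)).val :=
          (Equiv.sum_comp (Equiv.addRight g₀) _).symm
      _ = _ := by simp [neg_one_pow_val_add, hg₀, ZMod.val_one]
  linarith

section DotProduct

variable {ι : Type*} [Fintype ι]

-- `w ∈ (dotpForm ι).orthogonal U` unfolds to `∀ u ∈ U, dotp u w = 0`, as in the hypotheses below.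
abbrev dotpForm (ι : Type*) [Fintype ι] : LinearMap.BilinForm (ZMod 2) (ι → ZMod 2) :=
  dotProductBilin (ZMod 2) (ZMod 2)

lemma dotp_comm (x y : ι → ZMod 2) : dotp x y = dotp y x := dotProduct_comm x y

lemma dotp_add (x y z : ι → ZMod 2) : dotp x (y + z) = dotp x y + dotp x z := dotProduct_add x y z

lemma dotpForm_isRefl : (dotpForm ι).IsRefl := fun x y h => (dotp_comm y x).trans h

lemma dotpForm_nondegenerate : (dotpForm ι).Nondegenerate := by
  classical
  have sep (x : ι → ZMod 2) (hx : ∀ y, dotp x y = 0) : x = 0 :=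
    funext fun i => by
      simpa using (dotProduct_single (v := x) 1 i).symm.trans (hx (Pi.single i 1))
  exact ⟨fun x hx => sep x hx, fun y hy => sep y fun x => (dotp_comm y x).trans (hy x)⟩

lemma card_orthogonal_dotpForm (U : Submodule (ZMod 2) (ι → ZMod 2))
    [Fintype ((dotpForm ι).orthogonal U)] :
    Fintype.card ((dotpForm ι).orthogonal U) =
      2 ^ (Fintype.card ι - Module.finrank (ZMod 2) U) := by
  rw [Module.card_eq_pow_finrank (K := ZMod 2), ZMod.card,
    LinearMap.BilinForm.finrank_orthogonal dotpForm_nondegenerate,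
    Module.finrank_fintype_fun_eq_card]

lemma sum_neg_one_pow_dotp_eq_zero [DecidableEq ι] {z : ι → ZMod 2} (hz : z ≠ 0) :
    ∑ x, (-1 : ℤ) ^ (dotp x z).val = 0 :=
  sum_neg_one_pow_val_eq_zero (χ := ((dotpForm ι).flip z).toAddMonoidHom) fun hχ =>
    hz (dotpForm_nondegenerate.2 z fun x => DFunLike.congr_fun hχ x)

lemma sum_orthogonal_neg_one_pow_dotp (U : Submodule (ZMod 2) (ι → ZMod 2))
    [Fintype ((dotpForm ι).orthogonal U)] [DecidablePred (· ∈ U)] (y : ι → ZMod 2) :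
    ∑ w : (dotpForm ι).orthogonal U, (-1 : ℤ) ^ (dotp w y).val =
      if y ∈ U then (Fintype.card ((dotpForm ι).orthogonal U) : ℤ) else 0 := by
  split_ifs with hy
  · have hw (w : (dotpForm ι).orthogonal U) : dotp (w : ι → ZMod 2) y = 0 :=
      (dotp_comm _ _).trans (w.2 y hy)
    simp [hw]
  · refine sum_neg_one_pow_val_eq_zero
      (χ := ((dotpForm ι).flip y ∘ₗ ((dotpForm ι).orthogonal U).subtype).toAddMonoidHom)
      fun hχ => hy ?_
    rw [← LinearMap.BilinForm.orthogonal_orthogonal dotpForm_nondegenerate dotpForm_isRefl U]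
    exact fun w hw => DFunLike.congr_fun hχ ⟨w, hw⟩

lemma sum_WHT_sq [DecidableEq ι] (f : (ι → ZMod 2) → ZMod 2) :
    ∑ ω, WHT f ω ^ 2 = 2 ^ (2 * Fintype.card ι) := by
  have hchar (x y : ι → ZMod 2) :
      ∑ ω, (-1 : ℤ) ^ (dotp ω (x + y)).val = if x = y then 2 ^ Fintype.card ι else 0 := by
    split_ifs with hxy
    · simp [hxy, CharTwo.add_self_eq_zero, dotp]
    · exact sum_neg_one_pow_dotp_eq_zero fun h =>
        hxy (funext fun i => CharTwo.add_eq_zero.mp (congr_fun h i))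
  calc ∑ ω, WHT f ω ^ 2
      = ∑ ω, ∑ x, ∑ y, (-1 : ℤ) ^ (f x).val * (-1) ^ (f y).val *
          (-1 : ℤ) ^ (dotp ω (x + y)).val := by
        refine sum_congr rfl fun ω _ => ?_
        rw [WHT, sq, sum_mul_sum]
        refine sum_congr rfl fun x _ => sum_congr rfl fun y _ => ?_
        simp only [dotp_add, neg_one_pow_val_add]
        ring
    _ = ∑ x, ∑ y, (-1 : ℤ) ^ (f x).val * (-1) ^ (f y).val *
          ∑ ω, (-1 : ℤ) ^ (dotp ω (x + y)).val := by
        rw [sum_comm]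
        refine sum_congr rfl fun x _ => ?_
        rw [sum_comm]
        simp only [mul_sum]
    _ = 2 ^ (2 * Fintype.card ι) := by
        simp [hchar, ← mul_pow, two_mul, pow_add]

end DotProduct

lemma exists_forall_ne_eq_zero_of_pairwise_mul_eq_zero {α R : Type*} [Nonempty α]
    [MulZeroClass R] [NoZeroDivisors R] {x : α → R} (hx : Pairwise fun i j => x i * x j = 0) :
    ∃ i, ∀ j ≠ i, x j = 0 := by
  by_cases h : ∃ i, x i ≠ 0
  · obtain ⟨i, hi⟩ := h
    exact ⟨i, fun j hj => (mul_eq_zero.mp (hx hj)).resolve_right hi⟩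
  · push Not at h
    exact ⟨Classical.arbitrary α, fun j _ => h j⟩

section WalshSpectrum

variable {ι κ : Type*} [Fintype ι] [DecidableEq ι] [Fintype κ]

theorem IsPlateaued.isBent {f : (ι → ZMod 2) → ZMod 2} (hf : IsPlateaued 0 f)
    (hn : Even (Fintype.card ι)) : IsBent f := by
  have hsq : ((2 : ℤ) ^ (Fintype.card ι / 2)) ^ 2 = 2 ^ Fintype.card ι := by
    rw [← pow_mul, Nat.div_mul_cancel hn.two_dvd]
  have hle : ∀ ω ∈ univ, WHT f ω ^ 2 ≤ 2 ^ Fintype.card ι := fun ω _ => by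
    rcases hf ω with h | h | h <;> simp [h, hsq]
  have hsum : ∑ ω, WHT f ω ^ 2 = ∑ _ω : ι → ZMod 2, (2 : ℤ) ^ Fintype.card ι := by
    simp [sum_WHT_sq, two_mul, pow_add]
  intro ω
  have hω := (sum_eq_sum_iff_of_le hle).1 hsum ω (mem_univ ω)
  rcases hf ω with h | h | h
  · rw [h] at hω
    exact absurd hω.symm (by positivity)
  · simp [h]
  · simp [h]

lemma isPlateaued_of_two_mul_WHT {s : ℕ} {f : (ι → ZMod 2) → ZMod 2}
    (H : ∀ ω, ∃ g, IsPlateaued (s + 2) g ∧ (2 * WHT f ω = WHT g ω ∨ 2 * WHT f ω = -WHT g ω)) :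
    IsPlateaued s f := by
  intro ω
  obtain ⟨g, hg, hfg⟩ := H ω
  have hgω := hg ω
  rw [show (Fintype.card ι + (s + 2)) / 2 = (Fintype.card ι + s) / 2 + 1 by omega,
    pow_succ] at hgω
  generalize (2 : ℤ) ^ ((Fintype.card ι + s) / 2) = c at hgω ⊢
  omega

lemma card_mul_WHT_add_indicator (U : Submodule (ZMod 2) (κ → ZMod 2))
    [Fintype ((dotpForm κ).orthogonal U)] [DecidablePred (· ∈ U)]
    (a : (ι → ZMod 2) → ZMod 2) (h : κ → (ι → ZMod 2) → ZMod 2) (v : ι → ZMod 2) :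
    Fintype.card ((dotpForm κ).orthogonal U) *
        WHT (fun x => a x + if (fun i => h i x) ∈ U then 1 else 0) v =
      Fintype.card ((dotpForm κ).orthogonal U) * WHT a v -
        2 * ∑ w : (dotpForm κ).orthogonal U,
          WHT (fun x => a x + dotp (w : κ → ZMod 2) (fun i => h i x)) v := by
  simp only [WHT, mul_sum]
  rw [sum_comm, ← sum_sub_distrib]
  refine sum_congr rfl fun x _ => ?_
  simp only [neg_one_pow_val_add, ← sum_mul, ← mul_sum, sum_orthogonal_neg_one_pow_dotp]
  split_ifs <;> simp [ZMod.val_one]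
  ring

lemma exists_two_mul_WHT_add_indicator_eq (U : Submodule (ZMod 2) (κ → ZMod 2))
    [Fintype ((dotpForm κ).orthogonal U)] [DecidablePred (· ∈ U)]
    (hU : Fintype.card ((dotpForm κ).orthogonal U) = 4)
    (a : (ι → ZMod 2) → ZMod 2) (h : κ → (ι → ZMod 2) → ZMod 2)
    (hdisj : ∀ w w' : κ → ZMod 2, w ∈ (dotpForm κ).orthogonal U →
      w' ∈ (dotpForm κ).orthogonal U → w ≠ w' → ∀ v : ι → ZMod 2,
        WHT (fun x => a x + dotp w (fun i => h i x)) v *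
          WHT (fun x => a x + dotp w' (fun i => h i x)) v = 0)
    (v : ι → ZMod 2) :
    ∃ w ∈ (dotpForm κ).orthogonal U,
      2 * WHT (fun x => a x + if (fun i => h i x) ∈ U then 1 else 0) v =
          WHT (fun x => a x + dotp w (fun i => h i x)) v ∨
        2 * WHT (fun x => a x + if (fun i => h i x) ∈ U then 1 else 0) v =
          -WHT (fun x => a x + dotp w (fun i => h i x)) v := by
  set W : (dotpForm κ).orthogonal U → ℤ := fun w =>
    WHT (fun x => a x + dotp (w : κ → ZMod 2) (fun i => h i x)) v
  obtain ⟨w₀, hw₀⟩ := exists_forall_ne_eq_zero_of_pairwise_mul_eq_zero (x := W)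
    fun w w' hne => hdisj w w' w.2 w'.2 (Subtype.coe_injective.ne hne) v
  have hWa : WHT a v = W 0 := by simp [W, dotp]
  have key := card_mul_WHT_add_indicator U a h v
  rw [hU, Fintype.sum_eq_single w₀ hw₀, hWa, Nat.cast_ofNat] at key
  refine ⟨w₀, w₀.2, ?_⟩
  change _ = W w₀ ∨ _ = -W w₀
  by_cases h0 : w₀ = 0
  · subst h0
    left
    linarith
  · right
    have := hw₀ 0 (Ne.symm h0)
    linarith

end WalshSpectrum

open scoped Classical in
theorem stmt18_general {n k s : ℕ} (hk : 2 ≤ k)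
    (U : Submodule (ZMod 2) (Fin k → ZMod 2))
    (hdim : Module.finrank (ZMod 2) U = k - 2)
    (a : (Fin n → ZMod 2) → ZMod 2) (h : Fin k → (Fin n → ZMod 2) → ZMod 2)
    (hplat : ∀ w : Fin k → ZMod 2, (∀ u ∈ U, dotp u w = 0) →
      IsPlateaued (s + 2) (fun x => a x + dotp w (fun i => h i x)))
    (hdisj : ∀ w w' : Fin k → ZMod 2, (∀ u ∈ U, dotp u w = 0) →
      (∀ u ∈ U, dotp u w' = 0) → w ≠ w' →
      ∀ v : Fin n → ZMod 2,
        WHT (fun x => a x + dotp w (fun i => h i x)) v *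
          WHT (fun x => a x + dotp w' (fun i => h i x)) v = 0) :
    (2 < s + 2 →
      IsPlateaued s (fun x : Fin n → ZMod 2 =>
        a x + (if (fun i => h i x) ∈ U then (1 : ZMod 2) else 0))) ∧
    (Even n → s + 2 = 2 →
      IsBent (fun x : Fin n → ZMod 2 =>
        a x + (if (fun i => h i x) ∈ U then (1 : ZMod 2) else 0))) := by
  have hV : Fintype.card ((dotpForm (Fin k)).orthogonal U) = 4 := by
    rw [card_orthogonal_dotpForm, hdim, Fintype.card_fin, show k - (k - 2) = 2 by omega]
    rfl
  have hf : IsPlateaued s (fun x : Fin n → ZMod 2 =>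
      a x + (if (fun i => h i x) ∈ U then (1 : ZMod 2) else 0)) :=
    isPlateaued_of_two_mul_WHT fun v => by
      obtain ⟨w, hw, hfw⟩ := exists_two_mul_WHT_add_indicator_eq U hV a h hdisj v
      exact ⟨_, hplat w hw, hfw⟩
  refine ⟨fun _ => hf, fun hn hs => ?_⟩
  obtain rfl : s = 0 := by omega
  exact hf.isBent (by simpa using hn)

open scoped Classical in
/-- with `U ⊆ 𝔽₂^k` a subspace of dimension `k-2` (`k ≥ 2`),
`z = s+2` with `0 ≤ s ≤ n-3` and `z ≡ n (mod 2)`, and the functions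
`g_ω = a ⊕ ω·(h₁,…,h_k)` pairwise disjoint spectra `z`-plateaued on `𝔽₂^n` for
`ω ∈ U^⊥`, the function `𝔣 = a ⊕ φ_U(h₁,…,h_k)` is `s`-plateaued when `z > 2`,
and bent when `n` is even and `z = 2`. -/
theorem stmt18 {n k s : ℕ} (hk : 2 ≤ k) (hn : 3 ≤ n) (hs : s ≤ n - 3)
    (hpar : (s + 2) % 2 = n % 2)
    (U : Submodule (ZMod 2) (Fin k → ZMod 2))
    (hdim : Module.finrank (ZMod 2) U = k - 2)
    (a : (Fin n → ZMod 2) → ZMod 2) (h : Fin k → (Fin n → ZMod 2) → ZMod 2)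
    (hplat : ∀ w : Fin k → ZMod 2, (∀ u ∈ U, dotp u w = 0) →
      IsPlateaued (s + 2) (fun x => a x + dotp w (fun i => h i x)))
    (hdisj : ∀ w w' : Fin k → ZMod 2, (∀ u ∈ U, dotp u w = 0) →
      (∀ u ∈ U, dotp u w' = 0) → w ≠ w' →
      ∀ v : Fin n → ZMod 2,
        WHT (fun x => a x + dotp w (fun i => h i x)) v *
          WHT (fun x => a x + dotp w' (fun i => h i x)) v = 0) :
    (2 < s + 2 →
      IsPlateaued s (fun x : Fin n → ZMod 2 =>
        a x + (if (fun i => h i x) ∈ U then (1 : ZMod 2) else 0))) ∧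
    (Even n → s + 2 = 2 →
      IsBent (fun x : Fin n → ZMod 2 =>
        a x + (if (fun i => h i x) ∈ U then (1 : ZMod 2) else 0))) :=
  stmt18_general hk U hdim a h hplat hdisj
end
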